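/- arXiv:1804.09883 — 5 statements merged into one kernel-verified Lean document; each statement's English description precedes it below -/
import Mathlib

section
/- For every integer n ≥ 6, the second difference s(n) = q(n) − 2q(n−1) + q(n−2) of the number of partitions into distinct parts equals the number of butterfly partitions of n, i.e., the number of partitions of n into distinct parts p_1 > p_2 > ⋯ > p_k with k ≥ 3, p_1 = p_2 + 1 = p_3 + 2, and smallest part p_k ≥ 2. -/
/-- Number of partitions of `n` into distinct positive parts (`0` for negative `n`). -/
noncomputable def q (n : ℤ) : ℤ :=
  if 0 ≤ n then (Nat.card {p : Nat.Partition n.toNat // p.parts.Nodup} : ℤ) else 0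

/-- The butterfly sequence: second difference of `q`. -/
noncomputable def s (n : ℤ) : ℤ := q n - 2 * q (n - 1) + q (n - 2)

/-- A butterfly partition of `n`, written as its strictly decreasing list of parts
`p₁ > p₂ > ⋯ > p_k`: at least three parts, `p₁ = p₂ + 1 = p₃ + 2`, smallest part `≥ 2`. -/
def IsButterfly (n : ℤ) (l : List ℕ) : Prop :=
  l.Pairwise (· > ·) ∧ 3 ≤ l.length ∧
    l.getD 0 0 = l.getD 1 0 + 1 ∧ l.getD 0 0 = l.getD 2 0 + 2 ∧
    (∀ x ∈ l, 2 ≤ x) ∧ (l.sum : ℤ) = n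

/-!
Let `D m` be the partitions of `m` into distinct parts and `A m ⊆ D m` those whose two largest
parts are consecutive. Adding `1` to the largest part (creating the part `1` from the empty
partition) maps `D m` bijectively onto `D (m + 1) \ A (m + 1)`, so `q (m + 1) - q m = #A (m + 1)`
and `s n = #A n - #A (n - 1)`. Split `A m` into `Y m`, the partitions having `1` as a part, and
`N m`, the others. Adjoining a part `1` identifies `N m` with `Y (m + 1)`. The butterfly partitions
of `m + 2` are the members of `N (m + 2)` whose three largest parts are consecutive, and on the
remaining members of `N (m + 2)` subtracting `1` from the two largest parts is a bijection onto
`N m`. Hence `#A (m + 2) = #N (m + 1) + #N m + #butterflies = #A (m + 1) + #butterflies`.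
-/

def distinctParts (m : ℕ) : Set (List ℕ) := {l | l.IsChain (· > ·) ∧ 0 ∉ l ∧ l.sum = m}

def distinctPartsEquiv (m : ℕ) : {p : Nat.Partition m // p.parts.Nodup} ≃ distinctParts m where
  toFun p := ⟨p.1.parts.sort (· ≥ ·), by
    refine ⟨List.sortedGT_iff_isChain.1 (List.sortedGT_iff_nodup_and_sortedGE.2
      ⟨by simpa [← Multiset.coe_nodup] using p.2, (Multiset.pairwise_sort _ _).sortedGE⟩),
      ?_, ?_⟩
    · rw [Multiset.mem_sort]
      exact fun h => (p.1.parts_pos h).false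
    · rw [← Multiset.sum_coe, Multiset.sort_eq, p.1.parts_sum]⟩
  invFun l := ⟨⟨l.1, fun {x} hx => Nat.pos_of_ne_zero (by rintro rfl; exact l.2.2.1 hx),
      by simpa using l.2.2.2⟩,
    (List.isChain_iff_pairwise.1 l.2.1).imp ne_of_gt⟩
  left_inv p := by ext1; ext1; simp
  right_inv l := by
    ext1
    exact List.Perm.eq_of_sortedGE (Multiset.pairwise_sort (l.1 : Multiset ℕ) _).sortedGE
      (List.sortedGT_iff_isChain.2 l.2.1).sortedGE
      (Multiset.coe_eq_coe.1 (Multiset.sort_eq (l.1 : Multiset ℕ) (· ≥ ·)))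

theorem finite_distinctParts (m : ℕ) : (distinctParts m).Finite :=
  Set.finite_coe_iff.1 (Finite.of_equiv _ (distinctPartsEquiv m))

theorem q_natCast (m : ℕ) : q m = (distinctParts m).ncard := by
  rw [q, if_pos (Int.natCast_nonneg m), Int.toNat_natCast, Nat.card_congr (distinctPartsEquiv m),
    Nat.card_coe_set_eq]

theorem List.isChain_gt_append_singleton {α : Type*} [Preorder α] {l : List α} {a : α} :
    (l ++ [a]).IsChain (· > ·) ↔ l.IsChain (· > ·) ∧ ∀ x ∈ l, a < x := by
  simp [List.isChain_iff_pairwise, List.pairwise_append]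

theorem List.forall_mem_two_le_iff {l : List ℕ} :
    (∀ x ∈ l, 2 ≤ x) ↔ 0 ∉ l ∧ 1 ∉ l := by
  grind

theorem List.IsChain.dropLast_append_one {l : List ℕ} (hl : l.IsChain (· > ·)) (h0 : 0 ∉ l)
    (h1 : 1 ∈ l) : l.dropLast ++ [1] = l := by
  obtain ⟨t, c, rfl⟩ := l.eq_nil_or_concat'.resolve_left (List.ne_nil_of_mem h1)
  have hc := (List.isChain_gt_append_singleton.1 hl).2
  simp only [List.mem_append, List.mem_singleton] at h0 h1
  rcases h1 with h1 | rfl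
  · have := hc 1 h1
    omega
  · simp

def TopTwoConsecutive : List ℕ → Prop
  | a :: b :: _ => a = b + 1
  | _ => False

def TopThreeConsecutive : List ℕ → Prop
  | a :: b :: c :: _ => a = b + 1 ∧ b = c + 1
  | _ => False

theorem TopThreeConsecutive.topTwoConsecutive {l : List ℕ} (h : TopThreeConsecutive l) :
    TopTwoConsecutive l := by
  rcases l with _ | ⟨a, _ | ⟨b, _ | ⟨c, t⟩⟩⟩ <;>
    simp_all [TopThreeConsecutive, TopTwoConsecutive]

def consecutiveTopParts (m : ℕ) : Set (List ℕ) := distinctParts m ∩ {l | TopTwoConsecutive l}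

def butterflyParts (m : ℕ) : Set (List ℕ) :=
  distinctParts m ∩ {l | TopThreeConsecutive l ∧ 1 ∉ l}

theorem finite_consecutiveTopParts (m : ℕ) : (consecutiveTopParts m).Finite :=
  (finite_distinctParts m).subset Set.inter_subset_left

theorem setOf_isButterfly (m : ℕ) : {l | IsButterfly m l} = butterflyParts m := by
  ext l
  simp only [IsButterfly, butterflyParts, distinctParts, List.forall_mem_two_le_iff,
    ← List.isChain_iff_pairwise, Set.mem_ofPred_eq, Set.mem_inter_iff, Nat.cast_inj]
  rcases l with _ | ⟨a, _ | ⟨b, _ | ⟨c, t⟩⟩⟩ <;> simp [TopThreeConsecutive]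
  grind

def succHead : List ℕ → List ℕ
  | [] => [1]
  | a :: l => (a + 1) :: l

def predHead : List ℕ → List ℕ
  | [] => []
  | a :: l => if a = 1 then l else (a - 1) :: l

theorem bijOn_succHead (m : ℕ) :
    Set.BijOn succHead (distinctParts m) (distinctParts (m + 1) \ {l | TopTwoConsecutive l}) := by
  refine Set.InvOn.bijOn (f' := predHead) ⟨?_, ?_⟩ ?_ ?_ <;>
    rintro (_ | ⟨a, _ | ⟨b, l⟩⟩) <;>
    simp [distinctParts, succHead, predHead, TopTwoConsecutive] <;> grind

theorem ncard_distinctParts_succ (m : ℕ) :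
    (distinctParts (m + 1)).ncard =
      (distinctParts m).ncard + (consecutiveTopParts (m + 1)).ncard := by
  rw [← Set.ncard_inter_add_ncard_sdiff_eq_ncard _ {l | TopTwoConsecutive l}
    (finite_distinctParts _), ← (bijOn_succHead m).ncard_eq, add_comm]
  rfl

-- `3 ≤ m` excludes `[2, 1]`, which loses its second part when the `1` is removed.
theorem bijOn_append_one {m : ℕ} (hm : 3 ≤ m) :
    Set.BijOn (· ++ [1]) (consecutiveTopParts m \ {l | 1 ∈ l})
      (consecutiveTopParts (m + 1) ∩ {l | 1 ∈ l}) := by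
  refine Set.InvOn.bijOn (f' := List.dropLast) ⟨fun l _ => List.dropLast_concat, ?_⟩ ?_ ?_
  · rintro l ⟨⟨⟨hl, h0, -⟩, -⟩, h1⟩
    exact hl.dropLast_append_one h0 h1
  · rintro l ⟨⟨⟨hl, h0, hsum⟩, htop⟩, h1⟩
    have hchain := List.isChain_gt_append_singleton.2 ⟨hl, List.forall_mem_two_le_iff.2 ⟨h0, h1⟩⟩
    refine ⟨⟨⟨hchain, by simp [h0], by simp [hsum]⟩, ?_⟩, by simp⟩
    rcases l with _ | ⟨a, _ | ⟨b, t⟩⟩ <;> simp_all [TopTwoConsecutive]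
  · rintro l ⟨⟨⟨hl, h0, hsum⟩, htop⟩, h1⟩
    obtain ⟨t, rfl⟩ : ∃ t, l = t ++ [1] := ⟨_, (hl.dropLast_append_one h0 h1).symm⟩
    obtain ⟨ht, ht2⟩ := List.isChain_gt_append_singleton.1 hl
    obtain ⟨ht0, ht1⟩ := List.forall_mem_two_le_iff.1 ht2
    simp only [List.dropLast_concat]
    refine ⟨⟨⟨ht, ht0, by simpa using hsum⟩, ?_⟩, ht1⟩
    rcases t with _ | ⟨a, _ | ⟨b, t⟩⟩ <;> simp_all [TopTwoConsecutive]

def mapTopTwo (f : ℕ → ℕ) : List ℕ → List ℕ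
  | a :: b :: l => f a :: f b :: l
  | l => l

-- `m ≠ 3` excludes `[3, 2]`, for which subtracting `1` would create the part `1`.
theorem bijOn_mapTopTwo_succ {m : ℕ} (hm : m ≠ 3) :
    Set.BijOn (mapTopTwo (· + 1)) (consecutiveTopParts m \ {l | 1 ∈ l})
      ((consecutiveTopParts (m + 2) \ {l | 1 ∈ l}) \ {l | TopThreeConsecutive l}) := by
  refine Set.InvOn.bijOn (f' := mapTopTwo (· - 1)) ⟨?_, ?_⟩ ?_ ?_ <;>
    rintro (_ | ⟨a, _ | ⟨b, _ | ⟨c, t⟩⟩⟩) <;>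
    simp [consecutiveTopParts, distinctParts, mapTopTwo, TopTwoConsecutive,
      TopThreeConsecutive] <;> grind

theorem consecutiveTopParts_sdiff_inter_eq_butterflyParts (m : ℕ) :
    (consecutiveTopParts m \ {l | 1 ∈ l}) ∩ {l | TopThreeConsecutive l} = butterflyParts m := by
  ext l
  simp only [consecutiveTopParts, butterflyParts, Set.mem_inter_iff, Set.mem_sdiff,
    Set.mem_ofPred_eq]
  exact ⟨fun ⟨⟨⟨hl, _⟩, h1⟩, h3⟩ => ⟨hl, h3, h1⟩,
    fun ⟨hl, h3, h1⟩ => ⟨⟨⟨hl, h3.topTwoConsecutive⟩, h1⟩, h3⟩⟩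

theorem ncard_consecutiveTopParts_add_two {m : ℕ} (hm : 4 ≤ m) :
    (consecutiveTopParts (m + 2)).ncard =
      (consecutiveTopParts (m + 1)).ncard + (butterflyParts (m + 2)).ncard := by
  have split_one (k : ℕ) := Set.ncard_inter_add_ncard_sdiff_eq_ncard _ {l | 1 ∈ l}
    (finite_consecutiveTopParts k)
  have split_three := Set.ncard_inter_add_ncard_sdiff_eq_ncard
    (consecutiveTopParts (m + 2) \ {l | 1 ∈ l}) {l | TopThreeConsecutive l}
    (finite_consecutiveTopParts _).sdiff
  rw [consecutiveTopParts_sdiff_inter_eq_butterflyParts] at split_three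
  have adjoin_one := (bijOn_append_one (m := m) (by omega)).ncard_eq
  have adjoin_one_succ : _ = (consecutiveTopParts (m + 2) ∩ _).ncard :=
    (bijOn_append_one (m := m + 1) (by omega)).ncard_eq
  have raise_top_two := (bijOn_mapTopTwo_succ (m := m) (by omega)).ncard_eq
  have := split_one (m + 1)
  have := split_one (m + 2)
  omega

theorem butterfly_eq_second_difference (n : ℤ) (hn : 6 ≤ n) :
    s n = Nat.card {l : List ℕ // IsButterfly n l} := by
  obtain ⟨m, rfl⟩ : ∃ m : ℕ, n = (m + 2 : ℕ) := ⟨(n - 2).toNat, by omega⟩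
  have hs : s (m + 2 : ℕ) = q (m + 2 : ℕ) - 2 * q (m + 1 : ℕ) + q m := by
    simp only [s]; push_cast; ring_nf
  have hb : Nat.card {l : List ℕ // IsButterfly (m + 2 : ℕ) l} =
      (butterflyParts (m + 2)).ncard := by
    rw [← setOf_isButterfly]
    exact Nat.card_coe_set_eq _
  have hD_two : (distinctParts (m + 2)).ncard =
      (distinctParts (m + 1)).ncard + (consecutiveTopParts (m + 2)).ncard :=
    ncard_distinctParts_succ (m + 1)
  have hD_one := ncard_distinctParts_succ m
  have hA := ncard_consecutiveTopParts_add_two (m := m) (by omega)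
  rw [hs, q_natCast, q_natCast, q_natCast, hb]
  omega
end

section
/- For every integer n ≥ 1, the first difference r(n) = q(n) − q(n−1) equals the number of partitions of n into distinct parts none of which is a power of 2 (where 1 = 2^0, 2, 4, 8, … all count as powers of 2). -/
/-- The first difference sequence of `q`. -/
noncomputable def r (n : ℤ) : ℤ := q n - q (n - 1)

/-!
The parts of a partition into distinct parts that are powers of two are exactly the binary
digits of their sum. Hence a distinct partition of `M` is determined by its remaining parts,
which form an arbitrary partition of some `k ≤ M` into distinct non-powers of two, and the powers
of two are recovered as the binary digits of `M - k`. So `q M = ∑_{k ≤ M} c k`, where `c k`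
counts the latter partitions.
-/

namespace Nat

def binaryParts (t : ℕ) : Multiset ℕ := (Finset.equivBitIndices t).val.map (2 ^ ·)

theorem binaryParts_sum_two_pow (s : Finset ℕ) :
    binaryParts (∑ i ∈ s, 2 ^ i) = s.val.map (2 ^ ·) := by
  rw [binaryParts, ← Finset.equivBitIndices_symm_apply, Equiv.apply_symm_apply]

theorem sum_binaryParts (t : ℕ) : (binaryParts t).sum = t :=
  Finset.equivBitIndices.symm_apply_apply t

theorem nodup_binaryParts (t : ℕ) : (binaryParts t).Nodup :=
  (Finset.equivBitIndices t).nodup.map (Nat.pow_right_injective le_rfl)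

theorem isPowerOfTwo_of_mem_binaryParts {t i : ℕ} (hi : i ∈ binaryParts t) :
    i.isPowerOfTwo := by
  obtain ⟨k, -, rfl⟩ := Multiset.mem_map.1 hi
  exact ⟨k, rfl⟩

theorem binaryParts_sum {S : Multiset ℕ} (hS : S.Nodup) (h : ∀ i ∈ S, i.isPowerOfTwo) :
    binaryParts S.sum = S := by
  have hlog : S.map (2 ^ log2 ·) = S := by
    refine (Multiset.map_congr rfl fun i hi => ?_).trans S.map_id
    obtain ⟨k, rfl⟩ := h i hi
    simp [log2_two_pow]
  obtain ⟨s, rfl⟩ : ∃ s : Finset ℕ, s.val.map (2 ^ ·) = S := by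
    refine ⟨⟨S.map log2, Multiset.Nodup.of_map (2 ^ ·) ?_⟩, ?_⟩
    · rwa [Multiset.map_map, Function.comp_def, hlog]
    · rwa [Multiset.map_map, Function.comp_def]
  rw [Finset.sum_map_val, binaryParts_sum_two_pow]

end Nat

namespace Multiset

theorem filter_not_isPowerOfTwo_add_binaryParts {R : Multiset ℕ}
    (hR : ∀ i ∈ R, ¬ i.isPowerOfTwo) (t : ℕ) :
    (R + Nat.binaryParts t).filter (¬ ·.isPowerOfTwo) = R := by
  rw [filter_add, filter_eq_self.2 hR,
    filter_eq_nil.2 fun i hi => not_not.2 (Nat.isPowerOfTwo_of_mem_binaryParts hi), add_zero]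

theorem Nodup.add_binaryParts {R : Multiset ℕ} (hnd : R.Nodup)
    (hR : ∀ i ∈ R, ¬ i.isPowerOfTwo) (t : ℕ) : (R + Nat.binaryParts t).Nodup :=
  nodup_add.2 ⟨hnd, Nat.nodup_binaryParts t, disjoint_left.2 fun hiR hiB =>
    hR _ hiR (Nat.isPowerOfTwo_of_mem_binaryParts hiB)⟩

end Multiset

namespace Nat.Partition

open Multiset

variable {M k : ℕ}

def nodupSumNotPowerOfTwoEquiv (hk : k ≤ M) :
    {p : M.Partition // p.parts.Nodup ∧ (p.parts.filter (¬ ·.isPowerOfTwo)).sum = k} ≃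
      {p : k.Partition // p.parts.Nodup ∧ ∀ i ∈ p.parts, ¬ i.isPowerOfTwo} where
  toFun p :=
    ⟨⟨p.1.parts.filter (¬ ·.isPowerOfTwo), fun hi => p.1.parts_pos (mem_of_mem_filter hi), p.2.2⟩,
      p.2.1.filter _, fun _ hi => (mem_filter.1 hi).2⟩
  invFun p :=
    ⟨⟨p.1.parts + Nat.binaryParts (M - k), fun {i} hi => by
        rcases mem_add.1 hi with hi | hi
        exacts [p.1.parts_pos hi, Nat.pos_of_isPowerOfTwo (Nat.isPowerOfTwo_of_mem_binaryParts hi)],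
        by rw [sum_add, Nat.sum_binaryParts, p.1.parts_sum]; omega⟩,
      p.2.1.add_binaryParts p.2.2 _,
      by simp only [filter_not_isPowerOfTwo_add_binaryParts p.2.2, p.1.parts_sum]⟩
  left_inv p := by
    obtain ⟨p, hnd, rfl⟩ := p
    refine Subtype.ext (Nat.Partition.ext ?_)
    show _ + Nat.binaryParts (M - _) = p.parts
    have hsum := p.parts.sum_filter_add_sum_filter_not (·.isPowerOfTwo)
    rw [p.parts_sum] at hsum
    rw [← Nat.eq_sub_of_add_eq hsum,
      Nat.binaryParts_sum (hnd.filter _) fun _ hi => (mem_filter.1 hi).2, add_comm, filter_add_not]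
  right_inv p :=
    Subtype.ext (Nat.Partition.ext (filter_not_isPowerOfTwo_add_binaryParts p.2.2 _))

theorem card_nodup_eq_sum_card_nodup_not_isPowerOfTwo (M : ℕ) :
    Nat.card {p : M.Partition // p.parts.Nodup} = ∑ k ∈ Finset.range (M + 1),
      Nat.card {p : k.Partition // p.parts.Nodup ∧ ∀ i ∈ p.parts, ¬ i.isPowerOfTwo} := by
  let nonPowerOfTwoSum (p : {p : M.Partition // p.parts.Nodup}) : Fin (M + 1) :=
    ⟨(p.1.parts.filter (¬ ·.isPowerOfTwo)).sum, by
      have := p.1.parts.sum_filter_add_sum_filter_not (·.isPowerOfTwo)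
      rw [p.1.parts_sum] at this
      omega⟩
  have fiberEquiv (k : Fin (M + 1)) : {p // nonPowerOfTwoSum p = k} ≃
      {p : M.Partition // p.parts.Nodup ∧ (p.parts.filter (¬ ·.isPowerOfTwo)).sum = k} :=
    (Equiv.subtypeEquivRight fun _ => Fin.ext_iff).trans
      (Equiv.subtypeSubtypeEquivSubtypeInter (fun p : M.Partition => p.parts.Nodup)
        fun p => (p.parts.filter (¬ ·.isPowerOfTwo)).sum = k)
  rw [← Fin.sum_univ_eq_sum_range, ← Nat.card_congr (Equiv.sigmaFiberEquiv nonPowerOfTwoSum),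
    Nat.card_sigma]
  exact Finset.sum_congr rfl fun k _ =>
    Nat.card_congr ((fiberEquiv k).trans (nodupSumNotPowerOfTwoEquiv (Nat.le_of_lt_succ k.is_lt)))

end Nat.Partition

theorem q_natCast_s6 (M : ℕ) : q M = ∑ k ∈ Finset.range (M + 1),
    (Nat.card {p : k.Partition // p.parts.Nodup ∧ ∀ i ∈ p.parts, ¬ i.isPowerOfTwo} : ℤ) := by
  rw [q, if_pos M.cast_nonneg, Int.toNat_natCast,
    Nat.Partition.card_nodup_eq_sum_card_nodup_not_isPowerOfTwo, Nat.cast_sum]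

theorem first_difference_eq_distinct_nonPowerOfTwo_count (n : ℤ) (hn : 1 ≤ n) :
    r n = Nat.card {p : Nat.Partition n.toNat //
      p.parts.Nodup ∧ ∀ i ∈ p.parts, ¬∃ k : ℕ, i = 2 ^ k} := by
  obtain ⟨m, rfl⟩ : ∃ m : ℕ, n = m + 1 := ⟨(n - 1).toNat, by omega⟩
  rw [r, add_sub_cancel_right, ← Nat.cast_succ, q_natCast_s6, q_natCast_s6, Finset.sum_range_succ,
    add_sub_cancel_left, Int.toNat_natCast]
  rfl
end

section
/- For every integer n ≥ 6, r_2(n−1) = r'_1(n); that is, the number of partitions of n−1 into distinct parts with the two largest parts consecutive and smallest part equal to 1 equals the number of partitions of n into distinct parts with the two largest parts consecutive, smallest part at least 2, and such that if the partition has at least three parts then the second largest part exceeds the third largest part by at least 2. -/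
/-- A partition of `m` into distinct parts `p₁ > p₂ > ⋯ > p_k`, written as its
strictly decreasing list of parts, with `k ≥ 2`, the two largest parts consecutive
(`p₁ = p₂ + 1`), and smallest part equal to `1`. -/
def IsR2 (m : ℤ) (l : List ℕ) : Prop :=
  l.Pairwise (· > ·) ∧ 2 ≤ l.length ∧ l.getD 0 0 = l.getD 1 0 + 1 ∧
    l.getD (l.length - 1) 0 = 1 ∧ (∀ x ∈ l, 0 < x) ∧ (l.sum : ℤ) = m

/-- A partition of `m` into distinct parts `p₁ > p₂ > ⋯ > p_k`, written as its
strictly decreasing list of parts, with `k ≥ 2`, the two largest parts consecutive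
(`p₁ = p₂ + 1`), smallest part at least `2`, and, whenever there are at least three
parts, `p₂ - p₃ ≥ 2`. -/
def IsR1' (m : ℤ) (l : List ℕ) : Prop :=
  l.Pairwise (· > ·) ∧ 2 ≤ l.length ∧ l.getD 0 0 = l.getD 1 0 + 1 ∧
    (∀ x ∈ l, 2 ≤ x) ∧ (3 ≤ l.length → l.getD 2 0 + 2 ≤ l.getD 1 0) ∧
    (l.sum : ℤ) = m

/-!
Deleting the part `1` and raising each of the two largest parts by `1` is a bijection from the
partitions counted by `r₂(n - 1)` onto those counted by `r'₁(n)`: both are of the form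
`(b + 1, b, s, 1)`, resp. `(b + 2, b + 1, s)`, for one and the same pair `(b, s)` with `s` strictly
decreasing with parts in `[2, b)`; for `r'₁` the bound `< b` is the gap condition `p₂ - p₃ ≥ 2`.
The only partitions not of this form are `2 + 1` (for `r₂(3)`) and `3 + 2` (for `r'₁(5)`).
-/

theorem List.getD_length_sub_one {α : Type*} (l : List α) (d : α) :
    l.getD (l.length - 1) d = l.getLast?.getD d := by
  rw [List.getD_eq_getElem?_getD, List.getLast?_eq_getElem?]

theorem List.exists_cons_cons_of_two_le_length {α : Type*} {l : List α} (h : 2 ≤ l.length) :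
    ∃ a b t, l = a :: b :: t :=
  match l, h with
  | a :: b :: t, _ => ⟨a, b, t, rfl⟩

lemma isR2_cons_cons_append_singleton {m : ℤ} {a b c : ℕ} {s : List ℕ} :
    IsR2 m (a :: b :: s ++ [c]) ↔ a = b + 1 ∧ c = 1 ∧ 2 ≤ b ∧ s.Pairwise (· > ·) ∧
      (∀ x ∈ s, 2 ≤ x ∧ x < b) ∧ (a + b + s.sum + c : ℤ) = m := by
  rw [IsR2, List.getD_length_sub_one, List.getLast?_concat]
  simp only [List.cons_append, List.pairwise_cons, List.pairwise_append, List.mem_cons,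
    List.mem_append, List.not_mem_nil, or_false, or_imp, forall_and, forall_eq,
    List.getD_cons_zero, List.getD_cons_succ, List.length_cons, List.length_append, List.sum_cons,
    List.sum_append, List.sum_nil, Option.getD_some]
  grind

lemma isR1'_cons_cons {m : ℤ} {a b : ℕ} {s : List ℕ} :
    IsR1' m (a :: b :: s) ↔ a = b + 1 ∧ 2 ≤ b ∧ s.Pairwise (· > ·) ∧
      (∀ x ∈ s, 2 ≤ x ∧ x + 2 ≤ b) ∧ (a + b + s.sum : ℤ) = m := by
  rcases s with _ | ⟨c, s⟩ <;>
  simp only [IsR1', List.pairwise_cons, List.mem_cons, List.not_mem_nil, or_false, or_imp,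
    forall_and, forall_eq, List.getD_cons_zero, List.getD_cons_succ, List.getD_nil,
    List.length_cons, List.length_nil, List.sum_cons, List.sum_nil] <;>
  grind

def cores (w : ℤ) : Set (ℕ × List ℕ) :=
  {p | 2 ≤ p.1 ∧ p.2.Pairwise (· > ·) ∧ (∀ x ∈ p.2, 2 ≤ x ∧ x < p.1) ∧ (2 * p.1 + p.2.sum : ℤ) = w}

def r2OfCore (p : ℕ × List ℕ) : List ℕ := (p.1 + 1) :: p.1 :: p.2 ++ [1]

def r1'OfCore (p : ℕ × List ℕ) : List ℕ := (p.1 + 2) :: (p.1 + 1) :: p.2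

lemma r2OfCore_injective : Function.Injective r2OfCore := by
  rintro ⟨b, s⟩ ⟨b', s'⟩ h
  simp_all [r2OfCore]

lemma r1'OfCore_injective : Function.Injective r1'OfCore := by
  rintro ⟨b, s⟩ ⟨b', s'⟩ h
  simp_all [r1'OfCore]

lemma setOf_isR2_eq_image_cores {m : ℤ} (hm : m ≠ 3) :
    {l | IsR2 m l} = r2OfCore '' cores (m - 2) := by
  ext l
  constructor
  · intro hl
    obtain ⟨a, b, t, rfl⟩ := List.exists_cons_cons_of_two_le_length hl.2.1
    rcases t.eq_nil_or_concat' with rfl | ⟨s, c, rfl⟩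
    · obtain ⟨-, -, hab, hlast, -, hsum⟩ := hl
      rw [List.getD_length_sub_one] at hlast
      simp only [List.getD_cons_zero, List.getD_cons_succ, List.getLast?_cons_cons,
        List.getLast?_singleton, Option.getD_some, List.sum_cons, List.sum_nil] at hab hlast hsum
      omega
    rw [← List.cons_append, ← List.cons_append] at hl
    obtain ⟨rfl, rfl, hb, hs, hsb, hsum⟩ := isR2_cons_cons_append_singleton.mp hl
    exact ⟨(b, s), ⟨hb, hs, hsb, by dsimp only; omega⟩, rfl⟩
  · rintro ⟨⟨b, s⟩, ⟨hb, hs, hsb, hsum⟩, rfl⟩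
    exact isR2_cons_cons_append_singleton.mpr ⟨rfl, rfl, hb, hs, hsb, by omega⟩

lemma setOf_isR1'_eq_image_cores {m : ℤ} (hm : m ≠ 5) :
    {l | IsR1' m l} = r1'OfCore '' cores (m - 3) := by
  ext l
  constructor
  · intro hl
    obtain ⟨a, b, s, rfl⟩ := List.exists_cons_cons_of_two_le_length hl.2.1
    obtain ⟨rfl, hb₀, hs, hsb, hsum⟩ := isR1'_cons_cons.mp hl
    obtain ⟨b, rfl⟩ : ∃ b', b = b' + 1 := ⟨b - 1, by omega⟩
    have hb : 2 ≤ b := by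
      rcases s with _ | ⟨x, s⟩
      · simp only [List.sum_nil] at hsum
        omega
      · have := hsb x List.mem_cons_self
        omega
    refine ⟨(b, s), ⟨hb, hs, fun x hx => ⟨(hsb x hx).1, ?_⟩, by dsimp only; omega⟩, rfl⟩
    linarith [(hsb x hx).2]
  · rintro ⟨⟨b, s⟩, ⟨hb, hs, hsb, hsum⟩, rfl⟩
    refine isR1'_cons_cons.mpr ⟨rfl, by omega, hs, fun x hx => ⟨(hsb x hx).1, ?_⟩, by omega⟩
    linarith [(hsb x hx).2]

theorem r2_pred_eq_r1' (n : ℤ) (hn : 6 ≤ n) :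
    Nat.card {l : List ℕ // IsR2 (n - 1) l} = Nat.card {l : List ℕ // IsR1' n l} := by
  have hR2 : {l | IsR2 (n - 1) l} = r2OfCore '' cores (n - 3) := by
    rw [setOf_isR2_eq_image_cores (by omega), show n - 1 - 2 = n - 3 by ring]
  change Nat.card {l | IsR2 (n - 1) l} = Nat.card {l | IsR1' n l}
  rw [hR2, setOf_isR1'_eq_image_cores (by omega), Nat.card_image_of_injective r2OfCore_injective,
    Nat.card_image_of_injective r1'OfCore_injective]
end

section
/- For every integer n ≥ 9, the number of partitions of n all of whose parts are odd and at least 5 equals the number of partitions of n in which the part 1 occurs at most twice, all parts greater than or equal to 2 are distinct, there are at least three parts greater than or equal to 2, and the three largest parts are consecutive integers (p_1 = p_2 + 1 = p_3 + 2). -/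
/-- A partition of `n`, written as its weakly decreasing list of (positive) parts,
in which the part `1` occurs at most twice, all parts `≥ 2` are distinct, there are
at least three parts `≥ 2`, and the three largest parts are consecutive integers
(`p₁ = p₂ + 1 = p₃ + 2`). -/
def IsAlmostButterfly (n : ℕ) (l : List ℕ) : Prop :=
  l.Pairwise (· ≥ ·) ∧ (∀ x ∈ l, 0 < x) ∧
    l.count 1 ≤ 2 ∧
    (l.filter (fun x => 2 ≤ x)).Nodup ∧
    3 ≤ (l.filter (fun x => 2 ≤ x)).length ∧
    l.getD 0 0 = l.getD 1 0 + 1 ∧ l.getD 0 0 = l.getD 2 0 + 2 ∧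
    l.sum = n

/-!
Let `D_k = ∏_{i=2}^{k+1} (1 + q^i)` and `D = lim D_k`, the series of
partitions into distinct parts `≥ 2`. Removing the factors for the parts `1` and `3` from Euler's
identity `∏ (1 - q^(2i+1))⁻¹ = ∏ (1 + q^i)` shows that partitions into odd parts `≥ 5` have
generating function `(1 - q) (1 - q³) (1 + q) D = (1 - q²) (1 - q³) D`.

An almost butterfly partition consists of `t ≤ 2` ones, a staircase `j + 4, j + 3, j + 2`, and
distinct parts in `[2, j + 1]`, so its generating function is
`(1 + q + q²) ∑_j q^(3j+9) D_j`. A telescoping identity for the `D_k` shows that the two series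
differ by `1 + q⁵ + q⁷`. Both sides are compared modulo `q^(n+1)`, where `D` may be replaced
by `D_n`.
-/

open Finset PowerSeries

theorem dvd_prod_range_sub_prod_range {R : Type*} [CommRing R] {f : ℕ → R} {d : R} {N : ℕ}
    (hf : ∀ i ≥ N, d ∣ f i - 1) {K : ℕ} (hK : N ≤ K) :
    d ∣ ∏ i ∈ range K, f i - ∏ i ∈ range N, f i := by
  induction K, hK using Nat.le_induction with
  | base => simp
  | succ K hK ih =>
    have : (∏ i ∈ range K, f i) * f K - ∏ i ∈ range N, f i =
        (∏ i ∈ range K, f i - ∏ i ∈ range N, f i) * f K + (∏ i ∈ range N, f i) * (f K - 1) := by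
      ring
    rw [prod_range_succ, this]
    exact dvd_add (dvd_mul_of_dvd_left ih _) (dvd_mul_of_dvd_right (hf K hK) _)

open scoped PowerSeries.WithPiTopology in
theorem PowerSeries.X_pow_dvd_sub_prod_range_of_hasProd {R : Type*} [CommRing R]
    [TopologicalSpace R] [T2Space R] {f : ℕ → R⟦X⟧} {a : R⟦X⟧} (h : HasProd f a) {n N : ℕ}
    (hf : ∀ i ≥ N, X ^ n ∣ f i - 1) : X ^ n ∣ a - ∏ i ∈ range N, f i := by
  refine X_pow_dvd_iff.mpr fun m hm ↦ sub_eq_zero.mpr ?_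
  have hlim := ((WithPiTopology.continuous_coeff R m).tendsto a).comp h.tendsto_prod_nat
  refine tendsto_nhds_unique hlim (tendsto_const_nhds.congr' ?_)
  filter_upwards [Filter.eventually_ge_atTop N] with K hK
  have := X_pow_dvd_iff.mp (dvd_prod_range_sub_prod_range hf hK) m hm
  rwa [map_sub, sub_eq_zero, eq_comm] at this

theorem PowerSeries.coeff_sum_X_pow {R : Type*} [Semiring R] {ι : Type*} (s : Finset ι)
    (w : ι → ℕ) (n : ℕ) : coeff n (∑ y ∈ s, (X : R⟦X⟧) ^ w y) = #{y ∈ s | w y = n} := by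
  simp [coeff_X_pow, sum_boole, @eq_comm _ n]

theorem Finset.prod_one_add_pow_eq_sum_powerset {R : Type*} [CommSemiring R] (x : R)
    (s : Finset ℕ) : ∏ i ∈ s, (1 + x ^ i) = ∑ t ∈ s.powerset, x ^ ∑ i ∈ t, i := by
  rw [prod_one_add]
  exact sum_congr rfl fun t _ ↦ prod_pow_eq_pow_sum t (fun i ↦ i) x

theorem Finset.sum_sort {M : Type*} [AddCommMonoid M] (s : Finset M) (r : M → M → Prop)
    [DecidableRel r] [IsTrans M r] [Std.Antisymm r] [Std.Total r] :
    (s.sort r).sum = ∑ i ∈ s, i := by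
  rw [← Multiset.sum_coe, sort_eq, Finset.sum, Multiset.map_id']

theorem List.eq_filter_append_replicate_count_one {l : List ℕ} (hl : l.Pairwise (· ≥ ·))
    (hpos : ∀ x ∈ l, 0 < x) : l = l.filter (2 ≤ ·) ++ List.replicate (l.count 1) 1 := by
  have hones : l.filter (fun x ↦ !decide (2 ≤ x)) = List.replicate (l.count 1) 1 := by
    rw [← List.filter_eq]
    refine List.filter_congr fun x hx ↦ ?_
    have := hpos x hx
    grind
  rw [← hones]
  refine (List.filter_append_perm _ l).symm.eq_of_pairwise' hl ?_
  rw [hones, List.pairwise_append]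
  refine ⟨hl.filter _, List.pairwise_replicate.mpr (Or.inr le_rfl), ?_⟩
  simp only [List.mem_filter, List.mem_replicate, decide_eq_true_eq]
  omega

section DistinctProd

def distinctProd {R : Type*} [CommSemiring R] (x : R) (k : ℕ) : R :=
  ∏ i ∈ Icc 2 (k + 1), (1 + x ^ i)

theorem distinctProd_succ {R : Type*} [CommSemiring R] (x : R) (k : ℕ) :
    distinctProd x (k + 1) = distinctProd x k * (1 + x ^ (k + 2)) :=
  prod_Icc_succ_top (by omega) _

theorem prod_range_one_add_pow {R : Type*} [CommSemiring R] (x : R) (k : ℕ) :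
    ∏ i ∈ range (k + 1), (1 + x ^ (i + 1)) = (1 + x) * distinctProd x k := by
  induction k with
  | zero => simp [distinctProd]
  | succ k ih => rw [prod_range_succ, ih, distinctProd_succ, mul_assoc]

/-- From `k` to `k + 1` the left-hand side grows by `x ^ (3k + 12) * distinctProd x (k + 1)`,
exactly as the sum does. -/
theorem distinctProd_telescope {R : Type*} [CommRing R] (x : R) (k : ℕ) :
    (1 - x ^ 2) * (1 - x ^ 3) * distinctProd x k +
        x ^ (k + 2) * ((1 + x + x ^ 2) * (1 - x ^ 2 + x ^ (k + 3) + x ^ (2 * k + 7))) *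
          distinctProd x k =
      (1 + x + x ^ 2) * ∑ j ∈ range (k + 1), x ^ (3 * j + 9) * distinctProd x j +
        (1 + x ^ 5 + x ^ 7) := by
  induction k with
  | zero => simp [distinctProd]; ring
  | succ k ih =>
    rw [sum_range_succ, distinctProd_succ]
    linear_combination ih

end DistinctProd

namespace AlmostButterfly

/-- `(t, ⟨j, S⟩)` stands for the partition with largest parts `j + 4, j + 3, j + 2`, further
distinct parts `S ⊆ [2, j + 1]`, and `t` parts equal to `1`. -/
abbrev Data := ℕ × Σ _ : ℕ, Finset ℕ

def data (N : ℕ) : Finset Data :=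
  range 3 ×ˢ (range N).sigma fun j ↦ (Icc 2 (j + 1)).powerset

def weight (y : Data) : ℕ := y.1 + (3 * y.2.1 + 9) + ∑ i ∈ y.2.2, i

def toList (y : Data) : List ℕ :=
  (y.2.1 + 4) :: (y.2.1 + 3) :: (y.2.1 + 2) :: (y.2.2.sort (· ≥ ·) ++ List.replicate y.1 1)

def ofList (l : List ℕ) : Data :=
  (l.count 1, ⟨l.headD 0 - 4, ((l.filter (2 ≤ ·)).drop 3).toFinset⟩)

theorem mem_data {N t j : ℕ} {S : Finset ℕ} :
    (t, ⟨j, S⟩) ∈ data N ↔ t < 3 ∧ j < N ∧ S ⊆ Icc 2 (j + 1) := by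
  simp [data]

theorem sum_data_pow {R : Type*} [CommSemiring R] (x : R) (N : ℕ) :
    ∑ y ∈ data N, x ^ weight y =
      (1 + x + x ^ 2) * ∑ j ∈ range N, x ^ (3 * j + 9) * distinctProd x j := by
  have h3 : 1 + x + x ^ 2 = ∑ t ∈ range 3, x ^ t := by simp [sum_range_succ]
  rw [data, sum_product, h3, sum_mul]
  refine sum_congr rfl fun t _ ↦ ?_
  rw [sum_sigma, mul_sum]
  refine sum_congr rfl fun j _ ↦ ?_
  rw [distinctProd, prod_one_add_pow_eq_sum_powerset, mul_sum, mul_sum]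
  refine sum_congr rfl fun S _ ↦ ?_
  rw [weight, pow_add, pow_add]
  ring

theorem sum_toList (y : Data) : (toList y).sum = weight y := by
  simp only [toList, List.sum_cons, List.sum_append, sum_sort, List.sum_replicate, smul_eq_mul,
    mul_one, weight]
  ring

variable {t j : ℕ} {S : Finset ℕ}

theorem filter_toList (hS : S ⊆ Icc 2 (j + 1)) :
    (toList (t, ⟨j, S⟩)).filter (2 ≤ ·) = (j + 4) :: (j + 3) :: (j + 2) :: S.sort (· ≥ ·) := by
  have hS' : ∀ i ∈ S, 2 ≤ i := fun i hi ↦ (mem_Icc.mp (hS hi)).1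
  simpa [toList, List.filter_append] using hS'

theorem count_one_toList (hS : S ⊆ Icc 2 (j + 1)) : (toList (t, ⟨j, S⟩)).count 1 = t := by
  have : 1 ∉ S := fun h ↦ by simpa using hS h
  simpa [toList, List.count_eq_zero] using this

theorem ofList_toList (hS : S ⊆ Icc 2 (j + 1)) : ofList (toList (t, ⟨j, S⟩)) = (t, ⟨j, S⟩) := by
  rw [ofList, count_one_toList hS, filter_toList hS]
  simp [toList, sort_toFinset]

theorem isAlmostButterfly_toList (ht : t ≤ 2) (hS : S ⊆ Icc 2 (j + 1)) :
    IsAlmostButterfly (weight (t, ⟨j, S⟩)) (toList (t, ⟨j, S⟩)) := by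
  have hmem : ∀ i ∈ S.sort (· ≥ ·), 2 ≤ i ∧ i ≤ j + 1 := fun i hi ↦
    mem_Icc.mp (hS ((S.mem_sort _).mp hi))
  refine ⟨?_, ?_, by rwa [count_one_toList hS], ?_, ?_, rfl, rfl, sum_toList _⟩
  · simp only [toList, List.pairwise_cons, List.pairwise_append, List.mem_append,
      List.mem_replicate]
    refine ⟨?_, ?_, ?_, S.pairwise_sort _, List.pairwise_replicate.mpr (Or.inr le_rfl), ?_⟩ <;>
      grind
  · simp only [toList, List.mem_cons, List.mem_append, List.mem_replicate]
    grind
  · rw [filter_toList hS]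
    simp only [List.nodup_cons, List.mem_cons, S.sort_nodup]
    grind
  · simp [filter_toList hS]

variable {n : ℕ} {l : List ℕ}

theorem _root_.IsAlmostButterfly.exists_eq_toList (h : IsAlmostButterfly n l) :
    ∃ t j S, t ≤ 2 ∧ S ⊆ Icc 2 (j + 1) ∧ l = toList (t, ⟨j, S⟩) := by
  obtain ⟨hsort, hpos, hone, hnodup, hlen, hb, hc, -⟩ := h
  have hsplit := List.eq_filter_append_replicate_count_one hsort hpos
  obtain ⟨a, b, c, R, hF⟩ : ∃ a b c R, l.filter (2 ≤ ·) = a :: b :: c :: R := by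
    generalize l.filter (2 ≤ ·) = F at hlen
    rcases F with _ | ⟨a, _ | ⟨b, _ | ⟨c, R⟩⟩⟩
    all_goals simp at hlen
    exact ⟨a, b, c, R, rfl⟩
  have hge : ∀ x ∈ a :: b :: c :: R, 2 ≤ x := by simp [← hF]
  have hstrict : (a :: b :: c :: R).Pairwise (· > ·) := by
    rw [← hF]
    exact ((hsort.filter _).and hnodup).imp fun h ↦ lt_of_le_of_ne h.1 h.2.symm
  rw [hF] at hsplit
  rw [hsplit] at hb hc ⊢
  simp only [List.pairwise_cons, List.mem_cons] at hstrict hge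
  refine ⟨l.count 1, c - 2, R.toFinset, hone, fun x hx ↦ ?_, ?_⟩
  · rw [List.mem_toFinset] at hx
    have := hge x (by simp [hx])
    have := hstrict.2.2.1 x hx
    simp only [mem_Icc]
    omega
  · rw [toList, (List.toFinset_sort _ hstrict.2.2.2.nodup).mpr (hstrict.2.2.2.imp le_of_lt)]
    simp only [List.cons_append, List.getD_cons_zero, List.getD_cons_succ] at hb hc
    grind

theorem toList_ofList (h : IsAlmostButterfly n l) : toList (ofList l) = l := by
  obtain ⟨t, j, S, -, hS, rfl⟩ := h.exists_eq_toList
  rw [ofList_toList hS]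

theorem ofList_mem (h : IsAlmostButterfly n l) {N : ℕ} (hN : n < N) :
    ofList l ∈ {y ∈ data N | weight y = n} := by
  have hw : weight (ofList l) = n := by rw [← sum_toList, toList_ofList h, h.2.2.2.2.2.2.2]
  obtain ⟨t, j, S, ht, hS, rfl⟩ := h.exists_eq_toList
  rw [ofList_toList hS] at hw ⊢
  refine mem_filter.mpr ⟨mem_data.mpr ⟨by omega, ?_, hS⟩, hw⟩
  simp only [weight] at hw
  omega

theorem isAlmostButterfly_of_mem {y : Data} {N : ℕ} (hy : y ∈ {y ∈ data N | weight y = n}) :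
    IsAlmostButterfly n (toList y) := by
  obtain ⟨t, j, S⟩ := y
  obtain ⟨hdata, rfl⟩ := mem_filter.mp hy
  obtain ⟨ht, -, hS⟩ := mem_data.mp hdata
  exact isAlmostButterfly_toList (by omega) hS

theorem card_eq_card_filter_data {N : ℕ} (hN : n < N) :
    Nat.card {l // IsAlmostButterfly n l} = #{y ∈ data N | weight y = n} := by
  rw [← Nat.card_eq_finsetCard]
  exact Nat.card_congr
    { toFun l := ⟨ofList l, ofList_mem l.2 hN⟩
      invFun y := ⟨toList y, isAlmostButterfly_of_mem y.2⟩
      left_inv l := Subtype.ext (toList_ofList l.2)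
      right_inv y := by
        obtain ⟨⟨t, j, S⟩, hy⟩ := y
        exact Subtype.ext (ofList_toList (mem_data.mp (mem_filter.mp hy).1).2.2) }

end AlmostButterfly

section GeneratingFunctions

open Nat.Partition
open scoped PowerSeries.WithPiTopology

theorem powerSeriesMk_card_oddGeFive_eq :
    (PowerSeries.mk fun n ↦ (#(restricted n fun i ↦ Odd i ∧ 5 ≤ i) : ℤ)) =
      (1 - X) * (1 - X ^ 3) * PowerSeries.mk fun n ↦ (#(restricted n fun i ↦ ¬2 ∣ i) : ℤ) := by
  have hodd := hasProd_powerSeriesMk_card_restricted ℤ (fun i ↦ ¬2 ∣ i)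
  have hcorr := (hodd.mul (hasProd_ite_eq 0 (1 - X))).mul (hasProd_ite_eq 2 (1 - X ^ 3))
  rw [mul_comm, ← mul_assoc]
  refine (hasProd_powerSeriesMk_card_restricted ℤ (fun i ↦ Odd i ∧ 5 ≤ i)).unique ?_
  convert hcorr using 1
  funext i
  have geom (k : ℕ) (hk : k ≠ 0) : (∑' j : ℕ, (X : ℤ⟦X⟧) ^ (k * j)) * (1 - X ^ k) = 1 := by
    simp_rw [pow_mul]
    exact WithPiTopology.tsum_pow_mul_one_sub_of_constantCoeff_eq_zero (by simp [hk])
  rcases (by omega : i = 0 ∨ i = 2 ∨ (i ≠ 0 ∧ i ≠ 2)) with rfl | rfl | ⟨h0, h2⟩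
  · simpa using (geom 1 one_ne_zero).symm
  · simpa using (geom 3 three_ne_zero).symm
  · have : Odd (i + 1) ∧ 5 ≤ i + 1 ↔ ¬2 ∣ i + 1 := by
      rw [Nat.odd_iff, Nat.two_dvd_ne_zero]
      omega
    simp only [h0, h2, if_false, mul_one, this]

theorem X_pow_succ_dvd_powerSeriesMk_card_countRestricted_two_sub (n : ℕ) :
    X ^ (n + 1) ∣ (PowerSeries.mk fun n ↦ (#(countRestricted n 2) : ℤ)) -
      (1 + X) * distinctProd X n := by
  have hprod : HasProd (fun i ↦ 1 + X ^ (i + 1))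
      (PowerSeries.mk fun n ↦ (#(countRestricted n 2) : ℤ)) := by
    have h := hasProd_powerSeriesMk_card_countRestricted ℤ (m := 2) (by norm_num)
    simp only [sum_range_succ, range_zero, sum_empty, mul_zero, pow_zero, mul_one, zero_add] at h
    exact h
  rw [← prod_range_one_add_pow]
  refine X_pow_dvd_sub_prod_range_of_hasProd hprod fun i hi ↦ ?_
  simpa using pow_dvd_pow X (by omega : n + 1 ≤ i + 1)

theorem powerSeriesMk_card_oddGeFive_eq_add_almostButterfly :
    (PowerSeries.mk fun n ↦ (#(restricted n fun i ↦ Odd i ∧ 5 ≤ i) : ℤ)) =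
      1 + X ^ 5 + X ^ 7 + PowerSeries.mk fun n ↦ (Nat.card {l // IsAlmostButterfly n l} : ℤ) := by
  ext n
  set stairs := ∑ j ∈ range (n + 1), X ^ (3 * j + 9) * distinctProd (X : ℤ⟦X⟧) j
  have key : X ^ (n + 1) ∣ (PowerSeries.mk fun n ↦ (#(restricted n fun i ↦ Odd i ∧ 5 ≤ i) : ℤ)) -
      (1 + X ^ 5 + X ^ 7 + (1 + X + X ^ 2) * stairs) := by
    rw [powerSeriesMk_card_oddGeFive_eq,
      powerSeriesMk_card_restricted_eq_powerSeriesMk_card_countRestricted ℤ (m := 2) (by norm_num)]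
    set D := PowerSeries.mk fun n ↦ (#(countRestricted n 2) : ℤ)
    have : (1 - X) * (1 - X ^ 3) * D - (1 + X ^ 5 + X ^ 7 + (1 + X + X ^ 2) * stairs) =
        (1 - X) * (1 - X ^ 3) * (D - (1 + X) * distinctProd X n) - X ^ (n + 1) *
          (X * ((1 + X + X ^ 2) * (1 - X ^ 2 + X ^ (n + 3) + X ^ (2 * n + 7))) *
            distinctProd X n) := by
      linear_combination distinctProd_telescope (X : ℤ⟦X⟧) n
    rw [this]
    exact dvd_sub (dvd_mul_of_dvd_right
      (X_pow_succ_dvd_powerSeriesMk_card_countRestricted_two_sub n) _) (dvd_mul_right _ _)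
  have hn := X_pow_dvd_iff.mp key n (lt_add_one n)
  rw [map_sub, sub_eq_zero] at hn
  rw [hn, ← AlmostButterfly.sum_data_pow, map_add, map_add _ _ (PowerSeries.mk _), coeff_mk,
    coeff_sum_X_pow, AlmostButterfly.card_eq_card_filter_data (lt_add_one n)]

end GeneratingFunctions

theorem odd_ge_five_eq_almostButterfly_count (n : ℕ) (hn : 9 ≤ n) :
    Nat.card {p : Nat.Partition n // ∀ i ∈ p.parts, Odd i ∧ 5 ≤ i} =
      Nat.card {l : List ℕ // IsAlmostButterfly n l} := by
  have h := congrArg (coeff n) powerSeriesMk_card_oddGeFive_eq_add_almostButterfly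
  simp only [coeff_mk, map_add, coeff_one, coeff_X_pow] at h
  rw [if_neg (by omega), if_neg (by omega), if_neg (by omega)] at h
  rw [Nat.card_eq_fintype_card, Fintype.card_subtype]
  simpa [Nat.Partition.restricted] using h
end

section
/- For every integer n ≥ 6, s(n) = q(n) − 2q(n−1) + q(n−2) is odd if and only if either n = (3k² − k)/2 for some integer k with |k| ≥ 3, or n = (3k² − k)/2 + 2 for some integer k with k = −2 or |k| ≥ 3; for all other n ≥ 6, s(n) is even. -/
open PowerSeries PowerSeries.WithPiTopology Nat.Partition Finset

def IsPentagonal (m : ℤ) : Prop := ∃ k : ℤ, 2 * m = 3 * k ^ 2 - k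

theorem IsPentagonal.nonneg {m : ℤ} (hm : IsPentagonal m) : 0 ≤ m := by
  obtain ⟨k, hk⟩ := hm
  nlinarith [sq_nonneg (k - 1), sq_nonneg k]

theorem isPentagonal_natCast_iff_mem_range (n : ℕ) : IsPentagonal n ↔ n ∈ Set.range pentagonal := by
  refine ⟨fun ⟨k, hk⟩ ↦ ⟨k, ?_⟩, fun ⟨k, hk⟩ ↦ ⟨k, ?_⟩⟩
  · have h2 : 2 * (pentagonal k : ℤ) = 2 * n := by rw [two_mul_natCast_pentagonal, hk]; ring
    exact_mod_cast mul_left_cancel₀ two_ne_zero h2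
  · rw [← hk, two_mul_natCast_pentagonal]
    ring

theorem Nat.Partition.odd_card_distincts_iff (n : ℕ) :
    Odd #(distincts n) ↔ n ∈ Set.range pentagonal := by
  have hgen := hasProd_powerSeriesMk_card_countRestricted (ZMod 2) (m := 2) two_pos
  have hfac : (fun i : ℕ ↦ ∑ j ∈ range 2, (X : (ZMod 2)⟦X⟧) ^ ((i + 1) * j)) =
      fun i ↦ 1 - X ^ (i + 1) := by
    have : CharP (ZMod 2)⟦X⟧ 2 := charP_of_injective_algebraMap' (ZMod 2) 2
    ext1 i
    rw [CharTwo.sub_eq_add, sum_range_succ, sum_range_one, mul_zero, mul_one, pow_zero]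
  rw [hfac] at hgen
  have hc := congrArg (coeff n) (hgen.unique (hasProd_one_sub_X_pow (ZMod 2)))
  rw [coeff_mk, countRestricted_two] at hc
  rw [← not_iff_not, Nat.not_odd_iff_even, ← coeff_pentagonalSeries_eq_zero_iff (R := ZMod 2), ← hc,
    ZMod.natCast_eq_zero_iff_even]

theorem q_natCast_s10 (n : ℕ) : q n = #(distincts n) := by
  rw [q, if_pos n.cast_nonneg, Int.toNat_natCast, Nat.card_eq_fintype_card, Fintype.card_subtype]
  rfl

theorem odd_q_iff (m : ℤ) : Odd (q m) ↔ IsPentagonal m := by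
  rcases lt_or_ge m 0 with hm | hm
  · rw [q, if_neg hm.not_ge]
    exact iff_of_false (by simp) fun h ↦ hm.not_ge h.nonneg
  · lift m to ℕ using hm
    rw [q_natCast_s10, Int.odd_coe_nat, odd_card_distincts_iff, isPentagonal_natCast_iff_mem_range]

theorem odd_s_iff (n : ℤ) : Odd (s n) ↔ ¬(Odd (q n) ↔ Odd (q (n - 2))) := by
  rw [s, Int.odd_add, Int.odd_sub, iff_true_intro (even_two_mul _), iff_true,
    ← Int.not_odd_iff_even]
  tauto

theorem exists_abs_ge_three_iff_isPentagonal {m : ℤ} (hm : 6 ≤ m) :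
    (∃ k : ℤ, 3 ≤ |k| ∧ 2 * m = 3 * k ^ 2 - k) ↔ IsPentagonal m ∧ m ≠ 7 := by
  constructor
  · rintro ⟨k, hk, h⟩
    exact ⟨⟨k, h⟩, by nlinarith [sq_abs k, le_abs_self k]⟩
  · rintro ⟨⟨k, h⟩, h7⟩
    refine ⟨k, ?_, h⟩
    by_contra! hk
    obtain ⟨hk₁, hk₂⟩ := abs_lt.1 hk
    interval_cases k <;> omega

theorem exists_eq_neg_two_or_abs_ge_three_iff_isPentagonal {m : ℤ} (hm : 3 ≤ m) :
    (∃ k : ℤ, (k = -2 ∨ 3 ≤ |k|) ∧ 2 * m = 3 * k ^ 2 - k) ↔ IsPentagonal m ∧ m ≠ 5 := by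
  constructor
  · rintro ⟨k, rfl | hk, h⟩
    · exact ⟨⟨-2, h⟩, by omega⟩
    · exact ⟨⟨k, h⟩, by nlinarith [sq_abs k, le_abs_self k]⟩
  · rintro ⟨⟨k, h⟩, h5⟩
    refine ⟨k, ?_, h⟩
    by_contra! hk
    obtain ⟨hk₁, hk₂⟩ := abs_lt.1 hk.2
    interval_cases k <;> omega

theorem eq_two_or_seven_of_isPentagonal_sub_two {n : ℤ} (hn : IsPentagonal n)
    (hn2 : IsPentagonal (n - 2)) : n = 2 ∨ n = 7 := by
  obtain ⟨k, hk⟩ := hn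
  obtain ⟨j, hj⟩ := hn2
  have h : (k - j) * (3 * (k + j) - 1) = 4 := by linear_combination hj - hk
  have hd := Int.le_of_dvd (by norm_num) ((abs_dvd _ _).2 ⟨_, h.symm⟩)
  have he := Int.le_of_dvd (by norm_num) ((abs_dvd _ _).2 (Dvd.intro_left _ h))
  rw [abs_le] at hd he
  obtain ⟨hk₁, hk₂⟩ : -3 < k ∧ k < 3 := by omega
  obtain ⟨hj₁, hj₂⟩ : -3 < j ∧ j < 3 := by omega
  interval_cases k <;> interval_cases j <;> omega

theorem s_odd_iff_pentagonal (n : ℤ) (hn : 6 ≤ n) :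
    Odd (s n) ↔
      (∃ k : ℤ, 3 ≤ |k| ∧ 2 * n = 3 * k ^ 2 - k) ∨
      (∃ k : ℤ, (k = -2 ∨ 3 ≤ |k|) ∧ 2 * n = 3 * k ^ 2 - k + 4) := by
  have hshift (k : ℤ) : 2 * n = 3 * k ^ 2 - k + 4 ↔ 2 * (n - 2) = 3 * k ^ 2 - k := by
    constructor <;> intro h <;> linarith
  simp only [hshift]
  rw [odd_s_iff, odd_q_iff, odd_q_iff, exists_abs_ge_three_iff_isPentagonal hn,
    exists_eq_neg_two_or_abs_ge_three_iff_isPentagonal (by linarith),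
    show n - 2 ≠ 5 ↔ n ≠ 7 by omega]
  by_cases h7 : n = 7
  · subst h7
    exact iff_of_false (not_not.2 (iff_of_true ⟨-2, by norm_num⟩ ⟨2, by norm_num⟩)) (by simp)
  · have hnot : ¬(IsPentagonal n ∧ IsPentagonal (n - 2)) := fun ⟨h, h'⟩ ↦ by
      have := eq_two_or_seven_of_isPentagonal_sub_two h h'
      omega
    tauto
end
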